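/- arXiv:1307.6987 — 5 statements merged into one kernel-verified Lean document; each statement's English description precedes it below -/
import Mathlib

section
/- The monoid of 2×2 matrices with non-negative integer entries and determinant 1 is freely generated by the matrices L = [[1,0],[1,1]] and U = [[1,1],[0,1]]; that is, every such matrix admits a unique factorization as a product of L's and U's. -/
/-!
Left multiplication by `L` adds the top row to the bottom row, and by `U` the bottom row to the
top row. A matrix `M ≠ 1` of determinant one has one row dominating the other entrywise (this is
where `ad = bc + 1` over `ℕ` is used), and never both, since equal rows would make the
determinant zero. Hence exactly one of `L⁻¹ M`, `U⁻¹ M` has natural entries; it again has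
determinant one and smaller off-diagonal entries, so peeling off generators terminates
(existence), and the first letter of any factorization is forced (uniqueness).
-/

def L : Matrix (Fin 2) (Fin 2) ℕ := !![1,0;1,1]
def U : Matrix (Fin 2) (Fin 2) ℕ := !![1,1;0,1]

namespace SL2Nat

def HasDetOne (M : Matrix (Fin 2) (Fin 2) ℕ) : Prop :=
  M 0 0 * M 1 1 = M 0 1 * M 1 0 + 1

def IsLUWord (w : List (Matrix (Fin 2) (Fin 2) ℕ)) : Prop :=
  ∀ A ∈ w, A = L ∨ A = U

variable {M P Q : Matrix (Fin 2) (Fin 2) ℕ}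

theorem ext_rows (h₀ : P 0 = Q 0) (h₁ : P 1 = Q 1) : P = Q := by
  funext i
  fin_cases i
  exacts [h₀, h₁]

@[simp] theorem L_mul_row_zero : (L * P) 0 = P 0 := by
  ext j; simp [L, Matrix.mul_apply, Fin.sum_univ_two]

@[simp] theorem L_mul_row_one : (L * P) 1 = P 0 + P 1 := by
  ext j; simp [L, Matrix.mul_apply, Fin.sum_univ_two]

@[simp] theorem U_mul_row_zero : (U * P) 0 = P 0 + P 1 := by
  ext j; simp [U, Matrix.mul_apply, Fin.sum_univ_two]

@[simp] theorem U_mul_row_one : (U * P) 1 = P 1 := by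
  ext j; simp [U, Matrix.mul_apply, Fin.sum_univ_two]

theorem hasDetOne_L_mul_iff : HasDetOne (L * P) ↔ HasDetOne P := by
  simp only [HasDetOne, L_mul_row_zero, L_mul_row_one, Pi.add_apply]
  constructor <;> intro h <;> linarith

theorem hasDetOne_U_mul_iff : HasDetOne (U * P) ↔ HasDetOne P := by
  simp only [HasDetOne, U_mul_row_zero, U_mul_row_one, Pi.add_apply]
  constructor <;> intro h <;> linarith

theorem HasDetOne.rows_ne (h : HasDetOne M) : M 0 ≠ M 1 := by
  intro hrow
  have h₀ := congrFun hrow 0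
  have h₁ := congrFun hrow 1
  unfold HasDetOne at h
  rw [h₀, h₁, mul_comm] at h
  omega

theorem HasDetOne.zero_lt_zero_zero (h : HasDetOne M) : 0 < M 0 0 :=
  Nat.pos_of_ne_zero fun h₀ => by simp [HasDetOne, h₀] at h

theorem HasDetOne.zero_lt_one_one (h : HasDetOne M) : 0 < M 1 1 :=
  Nat.pos_of_ne_zero fun h₁ => by simp [HasDetOne, h₁] at h

theorem HasDetOne.eq_one_or_rows_le (h : HasDetOne M) : M = 1 ∨ M 0 ≤ M 1 ∨ M 1 ≤ M 0 := by
  unfold HasDetOne at h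
  simp only [Pi.le_def, Fin.forall_fin_two]
  by_cases hac : M 0 0 ≤ M 1 0
  · exact Or.inr <| Or.inl ⟨hac, by nlinarith⟩
  by_cases hdb : M 1 1 ≤ M 0 1
  · exact Or.inr <| Or.inr ⟨by omega, hdb⟩
  have : M 0 1 + M 1 0 = 0 := by nlinarith
  left
  ext i j
  fin_cases i <;> fin_cases j <;> simp <;> nlinarith

theorem exists_L_mul_eq (h : M 0 ≤ M 1) : ∃ P, L * P = M :=
  ⟨Matrix.of ![M 0, M 1 - M 0], ext_rows L_mul_row_zero
    (L_mul_row_one.trans (add_tsub_cancel_of_le h))⟩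

theorem exists_U_mul_eq (h : M 1 ≤ M 0) : ∃ P, U * P = M :=
  ⟨Matrix.of ![M 0 - M 1, M 1], ext_rows (U_mul_row_zero.trans (tsub_add_cancel_of_le h))
    U_mul_row_one⟩

theorem L_mul_injective : Function.Injective (L * ·) := fun P Q h => by
  have h₀ : P 0 = Q 0 := by simpa using congrFun h 0
  have h₁ : P 0 + P 1 = Q 0 + Q 1 := by simpa using congrFun h 1
  exact ext_rows h₀ (add_left_cancel (h₀ ▸ h₁))

theorem U_mul_injective : Function.Injective (U * ·) := fun P Q h => by
  have h₁ : P 1 = Q 1 := by simpa using congrFun h 1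
  have h₀ : P 0 + P 1 = Q 0 + Q 1 := by simpa using congrFun h 0
  exact ext_rows (add_right_cancel (h₁ ▸ h₀)) h₁

theorem L_mul_row_le : (L * P) 0 ≤ (L * P) 1 := by simp

theorem U_mul_row_le : (U * P) 1 ≤ (U * P) 0 := by simp

theorem L_mul_ne_one : L * P ≠ 1 := fun h => by
  have h₀ := L_mul_row_le (P := P) 0
  rw [h] at h₀
  simp at h₀

theorem U_mul_ne_one : U * P ≠ 1 := fun h => by
  have h₁ := U_mul_row_le (P := P) 1
  rw [h] at h₁
  simp at h₁

theorem L_mul_ne_U_mul (h : HasDetOne (L * P)) : L * P ≠ U * Q := fun he =>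
  h.rows_ne (le_antisymm L_mul_row_le (he ▸ U_mul_row_le))

theorem offDiag_lt_L_mul (hP : HasDetOne P) : P 0 1 + P 1 0 < (L * P) 0 1 + (L * P) 1 0 := by
  simp only [L_mul_row_zero, L_mul_row_one, Pi.add_apply]
  have := hP.zero_lt_zero_zero
  omega

theorem offDiag_lt_U_mul (hP : HasDetOne P) : P 0 1 + P 1 0 < (U * P) 0 1 + (U * P) 1 0 := by
  simp only [U_mul_row_zero, U_mul_row_one, Pi.add_apply]
  have := hP.zero_lt_one_one
  omega

section Generators

variable {A B : Matrix (Fin 2) (Fin 2) ℕ}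

theorem mul_ne_one (hA : A = L ∨ A = U) : A * P ≠ 1 := by
  rcases hA with rfl | rfl
  exacts [L_mul_ne_one, U_mul_ne_one]

theorem eq_and_eq_of_mul_eq (hA : A = L ∨ A = U) (hB : B = L ∨ B = U)
    (hdet : HasDetOne (A * P)) (h : A * P = B * Q) : A = B ∧ P = Q := by
  rcases hA with rfl | rfl <;> rcases hB with rfl | rfl
  · exact ⟨rfl, L_mul_injective h⟩
  · exact absurd h (L_mul_ne_U_mul hdet)
  · exact absurd h.symm (L_mul_ne_U_mul (h ▸ hdet))
  · exact ⟨rfl, U_mul_injective h⟩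

theorem isLUWord_cons {w : List (Matrix (Fin 2) (Fin 2) ℕ)} :
    IsLUWord (A :: w) ↔ (A = L ∨ A = U) ∧ IsLUWord w :=
  List.forall_mem_cons

end Generators

variable {v w : List (Matrix (Fin 2) (Fin 2) ℕ)}

theorem IsLUWord.hasDetOne_prod (hw : IsLUWord w) : HasDetOne w.prod := by
  induction w with
  | nil => rfl
  | cons A w ih =>
    obtain ⟨hA, hw'⟩ := isLUWord_cons.1 hw
    rw [List.prod_cons]
    rcases hA with rfl | rfl
    exacts [hasDetOne_L_mul_iff.2 (ih hw'), hasDetOne_U_mul_iff.2 (ih hw')]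

theorem IsLUWord.eq_of_prod_eq (hv : IsLUWord v) (hw : IsLUWord w) (h : v.prod = w.prod) :
    v = w := by
  induction v generalizing w with
  | nil =>
    cases w with
    | nil => rfl
    | cons B w => exact absurd h.symm (mul_ne_one (isLUWord_cons.1 hw).1)
  | cons A v ih =>
    obtain ⟨hA, hv'⟩ := isLUWord_cons.1 hv
    cases w with
    | nil => exact absurd h (mul_ne_one hA)
    | cons B w =>
      obtain ⟨hB, hw'⟩ := isLUWord_cons.1 hw
      have hdet := hv.hasDetOne_prod
      simp only [List.prod_cons] at h hdet
      obtain ⟨rfl, hprod⟩ := eq_and_eq_of_mul_eq hA hB hdet h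
      rw [ih hv' hw' hprod]

theorem exists_isLUWord_prod_eq (h : HasDetOne M) : ∃ w, IsLUWord w ∧ w.prod = M := by
  induction hn : M 0 1 + M 1 0 using Nat.strong_induction_on generalizing M with
  | _ n ih =>
  rcases h.eq_one_or_rows_le with rfl | hle | hle
  · exact ⟨[], List.forall_mem_nil _, List.prod_nil⟩
  · obtain ⟨P, rfl⟩ := exists_L_mul_eq hle
    have hP := hasDetOne_L_mul_iff.1 h
    obtain ⟨w, hw, rfl⟩ := ih _ (hn ▸ offDiag_lt_L_mul hP) hP rfl
    exact ⟨L :: w, isLUWord_cons.2 ⟨Or.inl rfl, hw⟩, List.prod_cons⟩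
  · obtain ⟨P, rfl⟩ := exists_U_mul_eq hle
    have hP := hasDetOne_U_mul_iff.1 h
    obtain ⟨w, hw, rfl⟩ := ih _ (hn ▸ offDiag_lt_U_mul hP) hP rfl
    exact ⟨U :: w, isLUWord_cons.2 ⟨Or.inr rfl, hw⟩, List.prod_cons⟩

end SL2Nat

/-- SL₂(ℕ) is freely generated by L and U: every M with det 1 admits a unique
factorization as a product of L's and U's. -/
theorem stmt_0 (M : Matrix (Fin 2) (Fin 2) ℕ)
    (hdet : M 0 0 * M 1 1 = M 0 1 * M 1 0 + 1) :
    ∃! w : List (Matrix (Fin 2) (Fin 2) ℕ),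
      (∀ A ∈ w, A = L ∨ A = U) ∧ w.prod = M := by
  obtain ⟨w, hw, hprod⟩ := SL2Nat.exists_isLUWord_prod_eq hdet
  exact ⟨w, ⟨hw, hprod⟩, fun v ⟨hv, hvprod⟩ =>
    SL2Nat.IsLUWord.eq_of_prod_eq hv hw (hvprod.trans hprod.symm)⟩
end

section
/- If M is a product of ℓ factors each equal to L or U, with ℓ ≥ 2, and the product starts with L·U (i.e., M = L·U·(rest)), then trace(M) ≥ ℓ + 1. -/
lemma mulL (M : Matrix (Fin 2) (Fin 2) ℕ) :
    (M * L) 0 0 = M 0 0 + M 0 1 ∧ (M * L) 0 1 = M 0 1 ∧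
    (M * L) 1 0 = M 1 0 + M 1 1 ∧ (M * L) 1 1 = M 1 1 := by
  simp [L, Matrix.mul_apply, Fin.sum_univ_two]

lemma mulU (M : Matrix (Fin 2) (Fin 2) ℕ) :
    (M * U) 0 0 = M 0 0 ∧ (M * U) 0 1 = M 0 0 + M 0 1 ∧
    (M * U) 1 0 = M 1 0 ∧ (M * U) 1 1 = M 1 0 + M 1 1 := by
  simp [U, Matrix.mul_apply, Fin.sum_univ_two]

lemma key (rest : List (Matrix (Fin 2) (Fin 2) ℕ))
    (h : ∀ A ∈ rest, A = L ∨ A = U) :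
    (1 ≤ (L*U*rest.prod) 0 0 ∧ 1 ≤ (L*U*rest.prod) 0 1 ∧
     1 ≤ (L*U*rest.prod) 1 0 ∧ 1 ≤ (L*U*rest.prod) 1 1) ∧
    rest.length + 3 ≤ (L*U*rest.prod) 0 0 + (L*U*rest.prod) 1 1 := by
  induction rest using List.reverseRecOn with
  | nil =>
      simp [L, U, Matrix.mul_apply, Fin.sum_univ_two]
  | append_singleton s A ih =>
      have hs : ∀ B ∈ s, B = L ∨ B = U := fun B hB => h B (by simp [hB])
      have hA : A = L ∨ A = U := h A (by simp)
      obtain ⟨⟨h1, h2, h3, h4⟩, h5⟩ := ih hs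
      have hprod : L * U * (s ++ [A]).prod = (L * U * s.prod) * A := by
        simp [List.prod_append, mul_assoc]
      have hlen : (s ++ [A]).length = s.length + 1 := by simp
      rw [hprod, hlen]
      rcases hA with rfl | rfl
      · obtain ⟨e1, e2, e3, e4⟩ := mulL (L * U * s.prod)
        rw [e1, e2, e3, e4]
        exact ⟨⟨by omega, by omega, by omega, by omega⟩, by omega⟩
      · obtain ⟨e1, e2, e3, e4⟩ := mulU (L * U * s.prod)
        rw [e1, e2, e3, e4]
        exact ⟨⟨by omega, by omega, by omega, by omega⟩, by omega⟩

theorem stmt_5 (ℓ : ℕ) (hℓ : 2 ≤ ℓ) (rest : List (Matrix (Fin 2) (Fin 2) ℕ))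
    (hrest : ∀ A ∈ rest, A = L ∨ A = U) (hlen : rest.length = ℓ - 2) :
    ℓ + 1 ≤ Matrix.trace (L * U * rest.prod) := by
  obtain ⟨_, h5⟩ := key rest hrest
  rw [Matrix.trace_fin_two]
  omega
end

section
/- Let A_ℓ be the alternating product L·U·L·U·⋯ of length ℓ (starting with L). Then for any product B of ℓ factors from {L,U}, trace(A_ℓ) ≥ trace(B). -/
/-- The alternating word L, U, L, U, … of length ℓ. -/
def altList (ℓ : ℕ) : List (Matrix (Fin 2) (Fin 2) ℕ) :=
  (List.range ℓ).map (fun i => if i % 2 = 0 then L else U)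

/-!
Track, besides the trace, the off-diagonal sum `b + c` of a product. For `X ≠ Y` in `{L, U}`,
`tr (X Y M) = tr M + offDiag (Y M)` and `offDiag (X Y M) = offDiag M + tr (Y M)`; the alternating
products `Aₙ` satisfy these recurrences, because `U Aₙ` is `Aₙ₊₁` conjugated by the flip
`!![0,1;1,0]`. A repeated letter `X X M` only adds one entry of `M` to `tr (X M)` and to
`offDiag (X M)`; entries of a product of `n` letters are at most `fib (n + 1)`, while
`tr Aₙ₊₂ - tr Aₙ₊₁` and `offDiag Aₙ₊₂ - offDiag Aₙ₊₁` are entries of `Aₙ₊₁` of size at least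
`fib (n + 1)`. A two-step induction on the word then bounds its trace and off-diagonal sum by
those of `Aₙ`.
-/

open Matrix Nat

local notation "M₂" => Matrix (Fin 2) (Fin 2) ℕ

def offDiagSum (M : M₂) : ℕ := M 0 1 + M 1 0

/-- Conjugation by the permutation matrix `!![0,1;1,0]`. -/
def swapConj (M : M₂) : M₂ := M.submatrix Fin.rev Fin.rev

@[simp] lemma swapConj_apply (M : M₂) (i j : Fin 2) : swapConj M i j = M i.rev j.rev := rfl

section RowOperations

variable (M : M₂) (j : Fin 2)

@[simp] lemma L_mul_apply_zero : (L * M) 0 j = M 0 j := by simp [L, mul_apply]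
@[simp] lemma L_mul_apply_one : (L * M) 1 j = M 0 j + M 1 j := by simp [L, mul_apply]
@[simp] lemma U_mul_apply_zero : (U * M) 0 j = M 0 j + M 1 j := by simp [U, mul_apply]
@[simp] lemma U_mul_apply_one : (U * M) 1 j = M 1 j := by simp [U, mul_apply]

end RowOperations

lemma U_mul_eq_swapConj_L_mul_swapConj (M : M₂) : U * M = swapConj (L * swapConj M) := by
  ext i j
  fin_cases i <;> simp [add_comm]

lemma trace_mul_mul_of_ne {X Y : M₂} (hX : X = L ∨ X = U) (hY : Y = L ∨ Y = U) (hXY : X ≠ Y)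
    (M : M₂) : trace (X * (Y * M)) = trace M + offDiagSum (Y * M) ∧
      offDiagSum (X * (Y * M)) = offDiagSum M + trace (Y * M) := by
  rcases hX with rfl | rfl <;> rcases hY with rfl | rfl <;> first
    | exact absurd rfl hXY
    | simp only [trace_fin_two, offDiagSum, L_mul_apply_zero, L_mul_apply_one, U_mul_apply_zero,
        U_mul_apply_one]; omega

lemma trace_mul_self_mul_le {X : M₂} (hX : X = L ∨ X = U) {M : M₂} {k : ℕ}
    (hM : ∀ i j, M i j ≤ k) : trace (X * (X * M)) ≤ trace (X * M) + k ∧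
      offDiagSum (X * (X * M)) ≤ offDiagSum (X * M) + k := by
  have := hM 0 0; have := hM 0 1; have := hM 1 0; have := hM 1 1
  rcases hX with rfl | rfl <;>
    simp only [trace_fin_two, offDiagSum, L_mul_apply_zero, L_mul_apply_one, U_mul_apply_zero,
      U_mul_apply_one] <;> omega

lemma prod_column_le_fib : ∀ w : List M₂, (∀ A ∈ w, A = L ∨ A = U) → ∀ j,
    w.prod 0 j ≤ fib (w.length + 1) ∧ w.prod 1 j ≤ fib (w.length + 1) ∧
      w.prod 0 j + w.prod 1 j ≤ fib (w.length + 2)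
  | [], _, j => by fin_cases j <;> simp
  | X :: v, hw, j => by
    obtain ⟨h0, h1, h01⟩ := prod_column_le_fib v (fun A hA => hw A (List.mem_cons_of_mem X hA)) j
    have hfib : fib (v.length + 3) = fib (v.length + 1) + fib (v.length + 2) := fib_add_two
    have hmono : fib (v.length + 1) ≤ fib (v.length + 2) := fib_le_fib_succ
    rcases hw X List.mem_cons_self with rfl | rfl <;>
      simp only [List.prod_cons, List.length_cons, L_mul_apply_zero, L_mul_apply_one,
        U_mul_apply_zero, U_mul_apply_one, Nat.add_assoc, Nat.reduceAdd] <;> omega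

lemma prod_apply_le_fib {w : List M₂} (hw : ∀ A ∈ w, A = L ∨ A = U) (i j : Fin 2) :
    w.prod i j ≤ fib (w.length + 1) := by
  fin_cases i
  exacts [(prod_column_le_fib w hw j).1, (prod_column_le_fib w hw j).2.1]

def altProd (n : ℕ) : M₂ := (altList n).prod

lemma altList_add_two (n : ℕ) : altList (n + 2) = L :: U :: altList n := by
  simp [altList, List.range_succ_eq_map, Function.comp_def, Nat.add_assoc]

lemma altProd_succ (n : ℕ) : altProd (n + 1) = L * swapConj (altProd n) := by
  induction n with
  | zero => ext i j; fin_cases i <;> fin_cases j <;> simp [altProd, altList]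
  | succ n ih =>
    rw [altProd, altList_add_two, List.prod_cons, List.prod_cons, ← altProd, ih,
      U_mul_eq_swapConj_L_mul_swapConj]

lemma altProd_succ_apply (n : ℕ) :
    altProd (n + 1) 0 0 = altProd n 1 1 ∧ altProd (n + 1) 0 1 = altProd n 1 0 ∧
      altProd (n + 1) 1 0 = altProd n 1 1 + altProd n 0 1 ∧
      altProd (n + 1) 1 1 = altProd n 1 0 + altProd n 0 0 := by
  simp [altProd_succ]

lemma fib_le_altProd : ∀ n, fib n ≤ altProd n 1 0 ∧ fib n ≤ altProd n 1 1
  | 0 => by simp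
  | 1 => by simp [altProd, altList, L]
  | n + 2 => by
    obtain ⟨hc, hd⟩ := fib_le_altProd n
    obtain ⟨hc', hd'⟩ := fib_le_altProd (n + 1)
    obtain ⟨ha', hb', -, -⟩ := altProd_succ_apply n
    obtain ⟨-, -, hc'', hd''⟩ := altProd_succ_apply (n + 1)
    rw [fib_add_two, show n + 2 = n + 1 + 1 from rfl]
    omega

lemma trace_altProd_add_two (n : ℕ) :
    trace (altProd (n + 2)) = trace (altProd n) + offDiagSum (altProd (n + 1)) := by
  obtain ⟨h00, h01, h10, h11⟩ := altProd_succ_apply n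
  obtain ⟨h00', h01', h10', h11'⟩ := altProd_succ_apply (n + 1)
  rw [show n + 2 = n + 1 + 1 from rfl]
  simp only [trace_fin_two, offDiagSum]
  omega

lemma offDiagSum_altProd_add_two (n : ℕ) :
    offDiagSum (altProd (n + 2)) = offDiagSum (altProd n) + trace (altProd (n + 1)) := by
  obtain ⟨h00, h01, h10, h11⟩ := altProd_succ_apply n
  obtain ⟨h00', h01', h10', h11'⟩ := altProd_succ_apply (n + 1)
  rw [show n + 2 = n + 1 + 1 from rfl]
  simp only [trace_fin_two, offDiagSum]
  omega

lemma altProd_succ_add_fib_le (n : ℕ) :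
    trace (altProd (n + 1)) + fib (n + 1) ≤ trace (altProd (n + 2)) ∧
      offDiagSum (altProd (n + 1)) + fib (n + 1) ≤ offDiagSum (altProd (n + 2)) := by
  obtain ⟨h00, h01, h10, h11⟩ := altProd_succ_apply (n + 1)
  obtain ⟨hc, hd⟩ := fib_le_altProd (n + 1)
  rw [show n + 2 = n + 1 + 1 from rfl]
  simp only [trace_fin_two, offDiagSum]
  omega

theorem trace_le_and_offDiagSum_le : ∀ w : List M₂, (∀ A ∈ w, A = L ∨ A = U) →
    trace w.prod ≤ trace (altProd w.length) ∧ offDiagSum w.prod ≤ offDiagSum (altProd w.length)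
  | [], _ => by simp [altProd, altList]
  | [X], hw => by
    rcases hw X (List.mem_singleton_self X) with rfl | rfl <;>
      simp [altProd, altList, L, U, offDiagSum, trace_fin_two]
  | X :: Y :: v, hw => by
    have hv : ∀ A ∈ v, A = L ∨ A = U := fun A hA => hw A (by simp [hA])
    have hYv : ∀ A ∈ Y :: v, A = L ∨ A = U := fun A hA => hw A (List.mem_cons_of_mem X hA)
    obtain ⟨hT, hQ⟩ := trace_le_and_offDiagSum_le v hv
    obtain ⟨hT', hQ'⟩ := trace_le_and_offDiagSum_le (Y :: v) hYv
    have hAT := trace_altProd_add_two v.length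
    have hAQ := offDiagSum_altProd_add_two v.length
    obtain ⟨hgT, hgQ⟩ := altProd_succ_add_fib_le v.length
    simp only [List.prod_cons, List.length_cons, Nat.add_assoc, Nat.reduceAdd] at hT' hQ' ⊢
    have hX := hw X List.mem_cons_self
    by_cases hXY : X = Y
    · subst hXY
      have := trace_mul_self_mul_le hX (prod_apply_le_fib hv)
      omega
    · have := trace_mul_mul_of_ne hX (hYv Y List.mem_cons_self) hXY v.prod
      omega

theorem stmt_9 (ℓ : ℕ) (w : List (Matrix (Fin 2) (Fin 2) ℕ))
    (hw : ∀ A ∈ w, A = L ∨ A = U) (hlen : w.length = ℓ) :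
    Matrix.trace w.prod ≤ Matrix.trace (altList ℓ).prod := by
  subst hlen
  exact (trace_le_and_offDiagSum_le w hw).1
end

section
/- A 2×2 matrix over ℕ with determinant 1 has trace 2 only if it is of the form L^k or U^k for some k ≥ 0; consequently, an irreducible matrix in SL₂(ℕ) has trace at least 3. -/
lemma Lpow (n : ℕ) : L ^ n = !![1,0;n,1] := by
  induction n with
  | zero => simp [Matrix.one_fin_two]
  | succ n ih => rw [pow_succ, ih]; simp [L, Matrix.mul_fin_two]

lemma Upow (n : ℕ) : U ^ n = !![1,n;0,1] := by
  induction n with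
  | zero => simp [Matrix.one_fin_two]
  | succ n ih => rw [pow_succ, ih]; simp [U, Matrix.mul_fin_two, add_comm]

theorem stmt_13 (M : Matrix (Fin 2) (Fin 2) ℕ)
    (hdet : M 0 0 * M 1 1 = M 0 1 * M 1 0 + 1) :
    (Matrix.trace M = 2 → ∃ k, M = L ^ k ∨ M = U ^ k) ∧
    ((∃ p, ∀ i j, 0 < (M ^ p) i j) → 3 ≤ Matrix.trace M) := by
  have htr : Matrix.trace M = M 0 0 + M 1 1 := Matrix.trace_fin_two M
  have ha0 : 0 < M 0 0 := Nat.pos_of_ne_zero (fun h => by rw [h] at hdet; simp at hdet)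
  have hd0 : 0 < M 1 1 := Nat.pos_of_ne_zero (fun h => by rw [h] at hdet; simp at hdet)
  have key : Matrix.trace M = 2 → ∃ k, M = L ^ k ∨ M = U ^ k := by
    intro h2
    rw [htr] at h2
    have ha : M 0 0 = 1 := by omega
    have hd : M 1 1 = 1 := by omega
    rw [ha, hd] at hdet
    have : M 0 1 = 0 ∨ M 1 0 = 0 := by
      rcases Nat.mul_eq_zero.mp (by omega : M 0 1 * M 1 0 = 0) with h | h
      · exact Or.inl h
      · exact Or.inr h
    rcases this with hb | hc
    · refine ⟨M 1 0, Or.inl ?_⟩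
      rw [Lpow]
      ext i j
      fin_cases i <;> fin_cases j <;> simp [ha, hd, hb]
    · refine ⟨M 0 1, Or.inr ?_⟩
      rw [Upow]
      ext i j
      fin_cases i <;> fin_cases j <;> simp [ha, hd, hc]
  refine ⟨key, ?_⟩
  rintro ⟨p, hp⟩
  by_contra h3
  have h2 : Matrix.trace M = 2 := by omega
  rcases key h2 with ⟨k, hM | hM⟩
  · have := hp 0 1
    rw [hM, ← pow_mul, Lpow] at this
    simp at this
  · have := hp 1 0
    rw [hM, ← pow_mul, Upow] at this
    simp at this
end

section
/- If M ∈ SL₂(ℕ) is irreducible with L,U-factorization of length ℓ, then trace(M) ≥ ℓ + 1, with equality if and only if M is, up to cyclic permutation of the factors and exchanging L and U, equal to L·U^(ℓ−1). -/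
/-!
Irreducibility forces both letters to occur, so some cyclic rotation of the word reads `L U v`.
If `v` multiplies out to `[[p, q], [r, s]]`, then `trace (L U v) = p + q + r + 2s`. Prepending a
letter to `v` raises this weight by at least one, and by more once `v` contains both letters;
hence the trace is at least `ℓ + 1`, with equality only when `v` is a power of a single letter.
Exchanging `L` and `U` is conjugation by `[[0, 1], [1, 0]]`, so it does not change traces.
-/

open Matrix

theorem Matrix.trace_prod_eq_of_isRotated {n R : Type*} [Fintype n] [DecidableEq n]
    [CommSemiring R] {l l' : List (Matrix n n R)} (h : l ~r l') :
    trace l.prod = trace l'.prod := by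
  obtain ⟨k, rfl⟩ := h
  rw [List.rotate_eq_drop_append_take_mod, List.prod_append, trace_mul_comm,
    ← List.prod_append, List.take_append_drop]

theorem List.exists_eq_append_cons_replicate {α : Type*} {a b : α} {l : List α}
    (hl : ∀ c ∈ l, c = a ∨ c = b) (ha : a ∈ l) : ∃ x m, l = x ++ a :: replicate m b := by
  induction l using List.reverseRecOn with
  | nil => simp at ha
  | append_singleton s c ih =>
    by_cases hca : c = a
    · exact ⟨s, 0, by simp [hca]⟩
    have hcb : c = b := (hl c (by simp)).resolve_left hca
    obtain ⟨x, m, rfl⟩ := ih (fun d hd => hl d (by simp [hd])) (by simpa [Ne.symm hca] using ha)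
    exact ⟨x, m + 1, by simp [hcb, replicate_succ']⟩

theorem List.exists_isRotated_cons_cons {α : Type*} {a b : α} {l : List α} (hab : a ≠ b)
    (hl : ∀ c ∈ l, c = a ∨ c = b) (ha : a ∈ l) (hb : b ∈ l) : ∃ v, l ~r a :: b :: v := by
  obtain ⟨x₀, y₀, rfl⟩ := append_of_mem hb
  obtain ⟨x, m, hxm⟩ := exists_eq_append_cons_replicate (l := y₀ ++ x₀)
    (fun c hc => hl c (by simp only [mem_append, mem_cons] at hc ⊢; tauto))
    (by simp only [mem_append, mem_cons, hab, false_or] at ha ⊢; tauto)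
  refine ⟨replicate m b ++ x, ?_⟩
  have h₁ : x₀ ++ b :: y₀ ~r (y₀ ++ x₀) ++ [b] :=
    isRotated_append.trans (IsRotated.cons_append_singleton (l := y₀ ++ x₀))
  have h₂ : (y₀ ++ x₀) ++ [b] = x ++ a :: b :: replicate m b := by
    simp [hxm, replicate_succ', ← replicate_succ]
  rw [h₂] at h₁
  simpa using h₁.trans isRotated_append

lemma L_ne_U : L ≠ U := by
  intro h
  simpa [L, U] using congrFun (congrFun h 0) 1

lemma L_pow (n : ℕ) : L ^ n = !![1, 0; n, 1] := by
  induction n with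
  | zero => simp [one_fin_two]
  | succ k ih =>
    rw [pow_succ, ih, L, mul_fin_two]
    simp

lemma U_pow (n : ℕ) : U ^ n = !![1, n; 0, 1] := by
  induction n with
  | zero => simp [one_fin_two]
  | succ k ih =>
    rw [pow_succ, ih, U, mul_fin_two]
    simp [add_comm]

lemma L_mul_eq (M : Matrix (Fin 2) (Fin 2) ℕ) :
    L * M = !![M 0 0, M 0 1; M 0 0 + M 1 0, M 0 1 + M 1 1] := by
  rw [M.eta_fin_two, L, mul_fin_two]; simp

lemma U_mul_eq (M : Matrix (Fin 2) (Fin 2) ℕ) :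
    U * M = !![M 0 0 + M 1 0, M 0 1 + M 1 1; M 1 0, M 1 1] := by
  rw [M.eta_fin_two, U, mul_fin_two]; simp

lemma antidiag_mul_self : !![0, 1; 1, 0] * !![0, 1; 1, 0] = (1 : Matrix (Fin 2) (Fin 2) ℕ) := by
  rw [mul_fin_two, one_fin_two]; simp

lemma swap_eq_conj {A : Matrix (Fin 2) (Fin 2) ℕ} (hA : A = L ∨ A = U) :
    (if A = L then U else L) = !![0, 1; 1, 0] * A * !![0, 1; 1, 0] := by
  rcases hA with rfl | rfl
  · rw [if_pos rfl, L, U, mul_fin_two, mul_fin_two]; simp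
  · rw [if_neg L_ne_U.symm, L, U, mul_fin_two, mul_fin_two]; simp

lemma prod_map_swap {x : List (Matrix (Fin 2) (Fin 2) ℕ)} (hx : ∀ A ∈ x, A = L ∨ A = U) :
    (x.map fun A => if A = L then U else L).prod =
      !![0, 1; 1, 0] * x.prod * !![0, 1; 1, 0] := by
  induction x with
  | nil => rw [List.map_nil, List.prod_nil, mul_one, antidiag_mul_self]
  | cons a t ih =>
    rw [List.map_cons, List.prod_cons, ih (fun A hA => hx A (by simp [hA])),
      swap_eq_conj (hx a (by simp)), List.prod_cons]
    simp only [mul_assoc]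
    rw [← mul_assoc !![0, 1; 1, 0] !![0, 1; 1, 0], antidiag_mul_self, one_mul]

lemma trace_prod_map_swap {x : List (Matrix (Fin 2) (Fin 2) ℕ)} (hx : ∀ A ∈ x, A = L ∨ A = U) :
    trace (x.map fun A => if A = L then U else L).prod = trace x.prod := by
  rw [prod_map_swap hx, trace_mul_comm, ← mul_assoc, antidiag_mul_self, one_mul]

def luWeight (M : Matrix (Fin 2) (Fin 2) ℕ) : ℕ := M 0 0 + M 0 1 + M 1 0 + 2 * M 1 1

lemma trace_L_mul_U_mul (M : Matrix (Fin 2) (Fin 2) ℕ) : trace (L * U * M) = luWeight M := by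
  rw [trace_fin_two, luWeight, mul_assoc, L_mul_eq, U_mul_eq]
  simp only [of_apply, cons_val', cons_val_zero, cons_val_one, cons_val_fin_one]
  ring

lemma one_le_prod_apply {v : List (Matrix (Fin 2) (Fin 2) ℕ)} (hv : ∀ A ∈ v, A = L ∨ A = U) :
    1 ≤ v.prod 0 0 ∧ 1 ≤ v.prod 1 1 ∧ (U ∈ v → 1 ≤ v.prod 0 1) ∧ (L ∈ v → 1 ≤ v.prod 1 0) := by
  induction v with
  | nil => simp
  | cons a t ih =>
    obtain ⟨h00, h11, h01, h10⟩ := ih (fun A hA => hv A (by simp [hA]))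
    rcases hv a (by simp) with rfl | rfl
    · simp only [List.prod_cons, L_mul_eq, of_apply, cons_val', cons_val_zero, cons_val_one,
        cons_val_fin_one, List.mem_cons, L_ne_U.symm, true_or, false_or, forall_const]
      exact ⟨h00, by omega, h01, by omega⟩
    · simp only [List.prod_cons, U_mul_eq, of_apply, cons_val', cons_val_zero, cons_val_one,
        cons_val_fin_one, List.mem_cons, L_ne_U, true_or, false_or, forall_const]
      exact ⟨by omega, h11, by omega, h10⟩

lemma length_add_three_le_luWeight {v : List (Matrix (Fin 2) (Fin 2) ℕ)}
    (hv : ∀ A ∈ v, A = L ∨ A = U) :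
    v.length + 3 ≤ luWeight v.prod ∧ (L ∈ v → U ∈ v → v.length + 3 < luWeight v.prod) := by
  induction v with
  | nil => simp [luWeight]
  | cons a t ih =>
    have ht : ∀ A ∈ t, A = L ∨ A = U := fun A hA => hv A (by simp [hA])
    obtain ⟨hle, -⟩ := ih ht
    obtain ⟨h00, h11, h01, h10⟩ := one_le_prod_apply ht
    rcases hv a (by simp) with rfl | rfl
    · simp only [luWeight, List.prod_cons, L_mul_eq, of_apply, cons_val', cons_val_zero,
        cons_val_one, cons_val_fin_one, List.length_cons, List.mem_cons, L_ne_U.symm, true_or,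
        false_or, forall_const] at hle ⊢
      exact ⟨by omega, fun hU => by have := h01 hU; omega⟩
    · simp only [luWeight, List.prod_cons, U_mul_eq, of_apply, cons_val', cons_val_zero,
        cons_val_one, cons_val_fin_one, List.length_cons, List.mem_cons, L_ne_U, true_or,
        false_or, forall_const] at hle ⊢
      exact ⟨by omega, fun hL => by have := h10 hL; omega⟩

lemma L_mem_and_U_mem_of_pow_pos {w : List (Matrix (Fin 2) (Fin 2) ℕ)}
    (hw : ∀ A ∈ w, A = L ∨ A = U) (hpos : ∃ p, ∀ i j, 0 < (w.prod ^ p) i j) :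
    L ∈ w ∧ U ∈ w := by
  obtain ⟨p, hp⟩ := hpos
  constructor
  · by_contra hL
    have hU : ∀ A ∈ w, A = U := fun A hA => (hw A hA).resolve_left (by rintro rfl; exact hL hA)
    have := hp 1 0
    rw [List.prod_eq_pow_card w U hU, ← pow_mul, U_pow] at this
    simp at this
  · by_contra hU
    have hL : ∀ A ∈ w, A = L := fun A hA => (hw A hA).resolve_right (by rintro rfl; exact hU hA)
    have := hp 0 1
    rw [List.prod_eq_pow_card w L hL, ← pow_mul, L_pow] at this
    simp at this

lemma trace_prod_of_rotate_eq {w : List (Matrix (Fin 2) (Fin 2) ℕ)}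
    (hw : ∀ A ∈ w, A = L ∨ A = U) {n m : ℕ}
    (h : w.rotate n = L :: List.replicate m U ∨
      (w.rotate n).map (fun A => if A = L then U else L) = L :: List.replicate m U) :
    trace w.prod = m + 2 := by
  have hrot : trace w.prod = trace (w.rotate n).prod :=
    trace_prod_eq_of_isRotated (List.IsRotated.forall w n).symm
  have hLU : trace (L :: List.replicate m U).prod = m + 2 := by
    rw [List.prod_cons, List.prod_replicate, U_pow, L, mul_fin_two, trace_fin_two_of]
    ring
  rcases h with h | h
  · rw [hrot, h, hLU]
  · rw [hrot, ← trace_prod_map_swap (fun A hA => hw A (List.mem_rotate.mp hA)), h, hLU]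

theorem stmt_18 (ℓ : ℕ) (w : List (Matrix (Fin 2) (Fin 2) ℕ))
    (hw : ∀ A ∈ w, A = L ∨ A = U) (hlen : w.length = ℓ)
    (hirr : ∃ p, ∀ i j, 0 < (w.prod ^ p) i j) :
    ℓ + 1 ≤ Matrix.trace w.prod ∧
    (Matrix.trace w.prod = ℓ + 1 ↔
      ∃ n, w.rotate n = L :: List.replicate (ℓ - 1) U ∨
        (w.rotate n).map (fun A => if A = L then U else L) =
          L :: List.replicate (ℓ - 1) U) := by
  subst hlen
  obtain ⟨hL, hU⟩ := L_mem_and_U_mem_of_pow_pos hw hirr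
  obtain ⟨v, hrot⟩ := List.exists_isRotated_cons_cons L_ne_U hw hL hU
  have hv : ∀ A ∈ v, A = L ∨ A = U := fun A hA => hw A (hrot.mem_iff.mpr (by simp [hA]))
  have hlen : w.length = v.length + 2 := by simpa using hrot.perm.length_eq
  have htr : trace w.prod = luWeight v.prod := by
    rw [trace_prod_eq_of_isRotated hrot, List.prod_cons, List.prod_cons, ← mul_assoc,
      trace_L_mul_U_mul]
  obtain ⟨hle, hlt⟩ := length_add_three_le_luWeight hv
  refine ⟨by omega, fun heq => ?_, fun ⟨n, h⟩ => by rw [trace_prod_of_rotate_eq hw h]; omega⟩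
  rw [hlen, show v.length + 2 - 1 = v.length + 1 by omega]
  by_cases hLv : L ∈ v
  · have hvL : v = List.replicate v.length L := List.eq_replicate_iff.2 ⟨rfl, fun A hA =>
      (hv A hA).resolve_right (by rintro rfl; exact (hlt hLv hA).ne' (by omega))⟩
    obtain ⟨n, hn⟩ := hrot.trans List.IsRotated.cons_append_singleton
    refine ⟨n, Or.inr ?_⟩
    rw [hn, hvL]
    simp [L_ne_U.symm, List.replicate_succ']
  · have hvU : v = List.replicate v.length U := List.eq_replicate_iff.2 ⟨rfl, fun A hA =>
      (hv A hA).resolve_left (by rintro rfl; exact hLv hA)⟩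
    obtain ⟨n, hn⟩ := hrot
    exact ⟨n, Or.inl (by rw [hn, List.replicate_succ, ← hvU])⟩
end
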